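/- arXiv:1901.09258 — 3 statements merged into one kernel-verified Lean document; each statement's English description precedes it below -/
import Mathlib

section
/- Suppose either θ ≥ (k−1)/k, or θ < (k−1)/k and a^k < 1/(k−1−kθ). Then for every ξ₀ ∈ [aθ, a] the iterates γ⁽ⁿ⁾(ξ₀) converge as n → ∞ to ξ, the unique fixed point of γ in [aθ, a]. Consequently, under these conditions the equation γ(γ(x)) = x has x = ξ as its unique solution in [aθ, a]. -/
/-!
On `I = [aθ, a]` the map `γ` is a self-map with
`γ'(u) = -1 + (1 - u^(k-1) ((k-1) u - k a θ)) / (1 + u^k)^2 ∈ (-1, 0]`.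
The numerator is bounded below by `1 - max (a^k (k-1-kθ)) 0`, and the hypothesis on `a, θ, k`
says exactly that `a^k (k-1-kθ) < 1`; so `γ` is a contraction of `I`. The Banach fixed-point
theorem gives `ξ` and the convergence of every orbit in `I`. A periodic point `x ∈ I` (a fixed
point of `γ`, or a solution of `γ(γ(x)) = x`) has a constant subsequence of its orbit, so `x = ξ`.
-/

open Filter Topology Function Set NNReal

theorem Function.IsPeriodicPt.eq_of_tendsto_iterate {α : Type*} [TopologicalSpace α] [T2Space α]
    {f : α → α} {x y : α} {n : ℕ} (hx : IsPeriodicPt f n x) (hn : 0 < n)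
    (h : Tendsto (fun m => f^[m] x) atTop (𝓝 y)) : x = y := by
  have hsub : Tendsto (fun m => f^[n * m] x) atTop (𝓝 y) :=
    h.comp (tendsto_id.const_mul_atTop' hn)
  simp only [(hx.mul_const _).eq] at hsub
  exact tendsto_nhds_unique tendsto_const_nhds hsub

theorem exists_isFixedPt_tendsto_iterate_of_lipschitzOnWith {α : Type*} [MetricSpace α]
    {f : α → α} {s : Set α} {K : ℝ≥0} (hsc : IsComplete s) (hsf : MapsTo f s s)
    (hs : s.Nonempty) (hK : K < 1) (hf : LipschitzOnWith K f s) :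
    ∃ ξ ∈ s, IsFixedPt f ξ ∧ ∀ x ∈ s, Tendsto (fun n => f^[n] x) atTop (𝓝 ξ) := by
  have hcontr : ContractingWith K (hsf.restrict f s s) := ⟨hK, hf.mapsToRestrict hsf⟩
  obtain ⟨x₀, hx₀⟩ := hs
  obtain ⟨ξ, hξs, hξ, -⟩ := hcontr.exists_fixedPoint' hsc hsf hx₀ (edist_ne_top _ _)
  refine ⟨ξ, hξs, hξ, fun x hx => ?_⟩
  obtain ⟨η, hηs, hη, hxη, -⟩ := hcontr.exists_fixedPoint' hsc hsf hx (edist_ne_top _ _)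
  have hηξ : η = ξ := congrArg Subtype.val
    (hcontr.fixedPoint_unique' (x := ⟨η, hηs⟩) (y := ⟨ξ, hξs⟩) (Subtype.ext hη) (Subtype.ext hξ))
  rwa [← hηξ]

theorem pow_pred_mul_sub_le_max {a b u : ℝ} {k : ℕ} (hk : 1 ≤ k) (hu : 0 ≤ u) (hua : u ≤ a) :
    u ^ (k - 1) * ((k - 1) * u - k * b) ≤ max (a ^ (k - 1) * ((k - 1) * a - k * b)) 0 := by
  rcases le_or_gt ((k - 1) * u - k * b) 0 with hneg | hpos
  · exact (mul_nonpos_of_nonneg_of_nonpos (by positivity) hneg).trans (le_max_right _ _)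
  · have hk' : (0 : ℝ) ≤ k - 1 := by
      have : (1 : ℝ) ≤ k := by exact_mod_cast hk
      linarith
    refine le_max_of_le_left (mul_le_mul (pow_le_pow_left₀ hu hua _) ?_ hpos.le
      (pow_nonneg (hu.trans hua) _))
    linarith [mul_le_mul_of_nonneg_left hua hk']

/-- The map `γ`. -/
noncomputable def widomRowlinsonMap (a θ : ℝ) (k : ℕ) (u : ℝ) : ℝ :=
  a * (1 + θ) - u + (u - a * θ) / (1 + u ^ k)

namespace widomRowlinsonMap

variable {a θ u : ℝ} {k : ℕ}

theorem mapsTo_Icc (haθ : 0 ≤ a * θ) :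
    MapsTo (widomRowlinsonMap a θ k) (Icc (a * θ) a) (Icc (a * θ) a) := by
  rintro u ⟨hlo, hhi⟩
  have hD : 1 ≤ 1 + u ^ k := le_add_of_nonneg_right (pow_nonneg (haθ.trans hlo) k)
  have hq₀ : 0 ≤ (u - a * θ) / (1 + u ^ k) := div_nonneg (by linarith) (by linarith)
  have hq₁ : (u - a * θ) / (1 + u ^ k) ≤ u - a * θ := div_le_self (by linarith) hD
  constructor <;> simp only [widomRowlinsonMap] <;> linarith

theorem hasDerivAt (hu : 0 ≤ u) :
    HasDerivAt (widomRowlinsonMap a θ k)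
      (-1 + (1 + u ^ k - (u - a * θ) * (k * u ^ (k - 1))) / (1 + u ^ k) ^ 2) u := by
  have hD : 1 + u ^ k ≠ 0 := by positivity
  have hquot := ((hasDerivAt_id' u).sub_const (a * θ)).div
    ((hasDerivAt_pow k u).const_add 1) hD
  exact (((hasDerivAt_id' u).const_sub (a * (1 + θ))).add hquot).congr_deriv (by ring)

theorem abs_deriv_le (hk : 1 ≤ k) (haθ : 0 ≤ a * θ) (hM : a ^ k * (k - 1 - k * θ) < 1)
    (hu : u ∈ Icc (a * θ) a) :
    |deriv (widomRowlinsonMap a θ k) u| ≤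
      1 - (1 - max (a ^ k * (k - 1 - k * θ)) 0) / (1 + a ^ k) ^ 2 := by
  obtain ⟨hlo, hhi⟩ := hu
  have hu₀ : 0 ≤ u := haθ.trans hlo
  have hpow : ∀ x : ℝ, x ^ k = x ^ (k - 1) * x := fun x => by
    rw [← pow_succ, Nat.sub_add_cancel hk]
  set M := max (a ^ k * (k - 1 - k * θ)) 0
  set N := 1 + u ^ k - (u - a * θ) * (k * u ^ (k - 1))
  have hM₁ : M < 1 := max_lt hM one_pos
  have hN_lower : 1 - M ≤ N := by
    have := pow_pred_mul_sub_le_max (b := a * θ) hk hu₀ hhi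
    have hM_eq : a ^ (k - 1) * ((k - 1) * a - k * (a * θ)) = a ^ k * (k - 1 - k * θ) := by
      rw [hpow a]; ring
    have hN_eq : N = 1 - u ^ (k - 1) * ((k - 1) * u - k * (a * θ)) := by
      simp only [N]; rw [hpow u]; ring
    rw [hM_eq] at this
    linarith
  have hN_upper : N ≤ (1 + u ^ k) ^ 2 := by
    have : 0 ≤ (u - a * θ) * (k * u ^ (k - 1)) := by
      have : 0 ≤ u - a * θ := by linarith
      positivity
    nlinarith [pow_nonneg hu₀ k]
  have hD_le : (1 + u ^ k) ^ 2 ≤ (1 + a ^ k) ^ 2 := by gcongr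
  have hfrac_lower : (1 - M) / (1 + a ^ k) ^ 2 ≤ N / (1 + u ^ k) ^ 2 :=
    div_le_div₀ (by linarith) hN_lower (by positivity) hD_le
  have hfrac_upper : N / (1 + u ^ k) ^ 2 ≤ 1 := div_le_one_of_le₀ hN_upper (by positivity)
  have hc : (1 - M) / (1 + a ^ k) ^ 2 ≤ 1 := by
    refine div_le_one_of_le₀ ?_ (by positivity)
    nlinarith [le_max_right (a ^ k * (k - 1 - k * θ)) 0, pow_nonneg (hu₀.trans hhi) k]
  rw [(hasDerivAt hu₀).deriv, abs_le]
  constructor <;> linarith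

theorem exists_lipschitzOnWith_lt_one (hk : 1 ≤ k) (ha : 0 ≤ a) (haθ : 0 ≤ a * θ)
    (hM : a ^ k * (k - 1 - k * θ) < 1) :
    ∃ K : ℝ≥0, K < 1 ∧ LipschitzOnWith K (widomRowlinsonMap a θ k) (Icc (a * θ) a) := by
  set c := 1 - (1 - max (a ^ k * (k - 1 - k * θ)) 0) / (1 + a ^ k) ^ 2
  have hc : c < 1 := by
    have : 0 < 1 - max (a ^ k * (k - 1 - k * θ)) 0 := by
      linarith [max_lt hM one_pos]
    have := div_pos this (by positivity : 0 < (1 + a ^ k) ^ 2)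
    simp only [c]; linarith
  refine ⟨c.toNNReal, Real.toNNReal_lt_one.mpr hc, ?_⟩
  refine (convex_Icc _ _).lipschitzOnWith_of_nnnorm_deriv_le
    (fun u hu => (hasDerivAt (haθ.trans hu.1)).differentiableAt) fun u hu => ?_
  exact NNReal.le_toNNReal_of_coe_le (by simpa using abs_deriv_le hk haθ hM hu)

end widomRowlinsonMap

theorem pow_mul_lt_one_of_uniqueness_condition {a θ : ℝ} {k : ℕ} (hk : 1 ≤ k) (ha : 0 < a)
    (hcond : ((k : ℝ) - 1) / k ≤ θ ∨
      (θ < ((k : ℝ) - 1) / k ∧ a ^ k < 1 / ((k : ℝ) - 1 - k * θ))) :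
    a ^ k * (k - 1 - k * θ) < 1 := by
  have hk₀ : (0 : ℝ) < k := by exact_mod_cast hk
  rcases hcond with hθ | ⟨hθ, hak⟩
  · have : (k : ℝ) - 1 - k * θ ≤ 0 := by
      have := (div_le_iff₀ hk₀).mp hθ
      linarith
    exact (mul_nonpos_of_nonneg_of_nonpos (by positivity) this).trans_lt one_pos
  · have : 0 < (k : ℝ) - 1 - k * θ := by
      have := (lt_div_iff₀ hk₀).mp hθ
      linarith
    exact (lt_div_iff₀ this).mp (by simpa using hak)

/-- If `θ ≥ (k−1)/k`, or `θ < (k−1)/k` and `a^k < 1/(k−1−kθ)`, then the iterates of `γ`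
starting from any `ξ₀ ∈ [aθ, a]` converge to `ξ`, the unique fixed point of `γ` in
`[aθ, a]`; consequently `γ(γ(x)) = x` has `x = ξ` as its unique solution in `[aθ, a]`. -/
theorem stmt_12 (k : ℕ) (hk : 2 ≤ k) (a θ : ℝ) (ha : 0 < a) (hθ0 : 0 < θ) (hθ1 : θ < 1)
    (hcond : ((k : ℝ) - 1) / k ≤ θ ∨
      (θ < ((k : ℝ) - 1) / k ∧ a ^ k < 1 / ((k : ℝ) - 1 - k * θ))) :
    ∃ ξ ∈ Set.Icc (a * θ) a,
      (fun u : ℝ => a * (1 + θ) - u + (u - a * θ) / (1 + u ^ k)) ξ = ξ ∧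
      (∀ x ∈ Set.Icc (a * θ) a,
        (fun u : ℝ => a * (1 + θ) - u + (u - a * θ) / (1 + u ^ k)) x = x → x = ξ) ∧
      (∀ ξ₀ ∈ Set.Icc (a * θ) a,
        Filter.Tendsto
          (fun n : ℕ => (fun u : ℝ => a * (1 + θ) - u + (u - a * θ) / (1 + u ^ k))^[n] ξ₀)
          Filter.atTop (nhds ξ)) ∧
      (∀ x ∈ Set.Icc (a * θ) a,
        (fun u : ℝ => a * (1 + θ) - u + (u - a * θ) / (1 + u ^ k))
          ((fun u : ℝ => a * (1 + θ) - u + (u - a * θ) / (1 + u ^ k)) x) = x → x = ξ) := by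
  have hk₁ : 1 ≤ k := by omega
  have haθ : 0 ≤ a * θ := by positivity
  have hI : (Icc (a * θ) a).Nonempty := nonempty_Icc.2 (by nlinarith)
  obtain ⟨K, hK, hlip⟩ := widomRowlinsonMap.exists_lipschitzOnWith_lt_one hk₁ ha.le haθ
    (pow_mul_lt_one_of_uniqueness_condition hk₁ ha hcond)
  obtain ⟨ξ, hξI, hξ, htendsto⟩ := exists_isFixedPt_tendsto_iterate_of_lipschitzOnWith
    isClosed_Icc.isComplete (widomRowlinsonMap.mapsTo_Icc haθ) hI hK hlip
  refine ⟨ξ, hξI, hξ, fun x hx hfx => ?_, htendsto, fun x hx hffx => ?_⟩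
  · exact (IsFixedPt.isPeriodicPt (f := widomRowlinsonMap a θ k) hfx 1).eq_of_tendsto_iterate
      one_pos (htendsto x hx)
  · exact IsPeriodicPt.eq_of_tendsto_iterate (f := widomRowlinsonMap a θ k) (n := 2) hffx
      two_pos (htendsto x hx)
end

section
/- Let k = 2, 0 < θ < 1/3 and λ > 9/(4(1−3θ)), and let x₁* < x₂* be the two coordinates of the off-diagonal positive solutions (x₁*, x₂*), (x₂*, x₁*) of the fixed-point system x = λ((1+x+θy)/(1+x+y))², y = λ((1+θx+y)/(1+x+y))². Then every positive tree solution (z1, z2) of the Widom–Rowlinson recursion satisfies x₁* ≤ zj(i) ≤ x₂* for all vertices i ∈ V and j ∈ {1, 2}. -/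
/-!
Write `F(u, v) = (1 + u + θv)/(1 + u + v)` and `G(u, v) = λ F(u, v)^k`. Since `F` is increasing in
`u` and decreasing in `v`, the map `(a, b) ↦ (G(a, b), G(b, a))` propagates enclosures: if all
values of a tree solution lie in `[a, b]`, they lie in `[G(a, b), G(b, a)]`, and a fixed point
`(x, y)` with `a ≤ x`, `y ≤ b` satisfies `G(a, b) ≤ x`, `y ≤ G(b, a)`. Iterating from the enclosure
`[0, λ]` (valid since `F ≤ 1`) gives nested intervals whose endpoints converge to a fixed point
`(α, β)` with `α ≤ x₁ < x₂ ≤ β` enclosing every tree solution.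

For `k = 2` the off-diagonal fixed point is unique, so `(α, β) = (x₁, x₂)`: subtracting the two
fixed-point equations shows that `x + y` is a positive root of a quadratic whose roots have product
`1 - 2λ(1 - θ) < 0`, and adding them then determines `xy`.
-/

open Filter Topology Set

namespace WidomRowlinson

noncomputable def F (θ u v : ℝ) : ℝ := (1 + u + θ * v) / (1 + u + v)

noncomputable def G (k : ℕ) (lam θ u v : ℝ) : ℝ := lam * F θ u v ^ k

structure IsTreeSolution {V : Type*} (k : ℕ) (lam θ : ℝ) (S : V → Finset V) (z1 z2 : V → ℝ) :
    Prop where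
  card_eq : ∀ i, (S i).card = k
  eq_fst : ∀ i, z1 i = lam * ∏ j ∈ S i, F θ (z1 j) (z2 j)
  eq_snd : ∀ i, z2 i = lam * ∏ j ∈ S i, F θ (z2 j) (z1 j)

section F

variable {θ u v u' v' : ℝ}

lemma le_F (hθ : θ ≤ 1) (hu : 0 ≤ u) (hv : 0 ≤ v) : θ ≤ F θ u v := by
  rw [F, le_div_iff₀ (by linarith)]
  nlinarith

lemma F_le_one (hθ : θ ≤ 1) (hu : 0 ≤ u) (hv : 0 ≤ v) : F θ u v ≤ 1 := by
  rw [F, div_le_one (by linarith)]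
  nlinarith

lemma F_le_F (hθ : θ ≤ 1) (hu : 0 ≤ u) (hv' : 0 ≤ v') (huu : u ≤ u') (hvv : v' ≤ v) :
    F θ u v ≤ F θ u' v' := by
  have hv : 0 ≤ v := hv'.trans hvv
  have hu' : 0 ≤ u' := hu.trans huu
  rw [F, F, div_le_div_iff₀ (by linarith) (by linarith)]
  nlinarith [mul_nonneg (mul_nonneg (sub_nonneg.2 hθ) (sub_nonneg.2 hvv)) hu',
    mul_nonneg (mul_nonneg (sub_nonneg.2 hθ) hv') (sub_nonneg.2 huu),
    mul_nonneg (sub_nonneg.2 hθ) (sub_nonneg.2 hvv)]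

lemma F_nonneg (hθ0 : 0 ≤ θ) (hθ1 : θ ≤ 1) (hu : 0 ≤ u) (hv : 0 ≤ v) : 0 ≤ F θ u v :=
  hθ0.trans (le_F hθ1 hu hv)

lemma F_mem_Icc_F {a b : ℝ} (hθ : θ ≤ 1) (ha : 0 ≤ a) (hu : u ∈ Icc a b) (hv : v ∈ Icc a b) :
    F θ u v ∈ Icc (F θ a b) (F θ b a) :=
  ⟨F_le_F hθ ha (ha.trans hv.1) hu.1 hv.2, F_le_F hθ (ha.trans hu.1) ha hu.2 hv.1⟩

end F

section G

variable {k : ℕ} {lam θ u v u' v' : ℝ}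

lemma G_nonneg (hlam : 0 ≤ lam) (hθ0 : 0 ≤ θ) (hθ1 : θ ≤ 1) (hu : 0 ≤ u) (hv : 0 ≤ v) :
    0 ≤ G k lam θ u v :=
  mul_nonneg hlam (pow_nonneg (F_nonneg hθ0 hθ1 hu hv) k)

lemma G_le (hlam : 0 ≤ lam) (hθ0 : 0 ≤ θ) (hθ1 : θ ≤ 1) (hu : 0 ≤ u) (hv : 0 ≤ v) :
    G k lam θ u v ≤ lam :=
  mul_le_of_le_one_right hlam
    (pow_le_one₀ (F_nonneg hθ0 hθ1 hu hv) (F_le_one hθ1 hu hv))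

lemma G_le_G (hlam : 0 ≤ lam) (hθ0 : 0 ≤ θ) (hθ1 : θ ≤ 1) (hu : 0 ≤ u) (hv' : 0 ≤ v')
    (huu : u ≤ u') (hvv : v' ≤ v) : G k lam θ u v ≤ G k lam θ u' v' :=
  mul_le_mul_of_nonneg_left (pow_le_pow_left₀ (F_nonneg hθ0 hθ1 hu (hv'.trans hvv))
    (F_le_F hθ1 hu hv' huu hvv) k) hlam

lemma tendsto_G {ι : Type*} {l : Filter ι} {f g : ι → ℝ} {a b : ℝ} (hf : Tendsto f l (𝓝 a))
    (hg : Tendsto g l (𝓝 b)) (hab : 1 + a + b ≠ 0) :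
    Tendsto (fun n ↦ G k lam θ (f n) (g n)) l (𝓝 (G k lam θ a b)) :=
  ((((hf.const_add 1).add (hg.const_mul θ)).div ((hf.const_add 1).add hg) hab).pow k).const_mul lam

lemma mul_prod_F_mem_Icc {V : Type*} (s : Finset V) {f g : V → ℝ} {a b : ℝ}
    (hlam : 0 ≤ lam) (hθ0 : 0 ≤ θ) (hθ1 : θ ≤ 1) (ha : 0 ≤ a)
    (hf : ∀ j ∈ s, f j ∈ Icc a b) (hg : ∀ j ∈ s, g j ∈ Icc a b) :
    lam * ∏ j ∈ s, F θ (f j) (g j) ∈ Icc (G s.card lam θ a b) (G s.card lam θ b a) := by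
  have hfg j (hj : j ∈ s) := F_mem_Icc_F hθ1 ha (hf j hj) (hg j hj)
  rw [G, G, ← Finset.prod_const, ← Finset.prod_const]
  refine ⟨mul_le_mul_of_nonneg_left (Finset.prod_le_prod (fun j hj ↦ ?_) fun j hj ↦ (hfg j hj).1)
      hlam,
    mul_le_mul_of_nonneg_left (Finset.prod_le_prod (fun j hj ↦ ?_) fun j hj ↦ (hfg j hj).2) hlam⟩
  · exact F_nonneg hθ0 hθ1 ha (ha.trans ((hf j hj).1.trans (hf j hj).2))
  · exact F_nonneg hθ0 hθ1 (ha.trans (hf j hj).1) (ha.trans (hg j hj).1)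

end G

noncomputable def step (k : ℕ) (lam θ : ℝ) (p : ℝ × ℝ) : ℝ × ℝ :=
  (G k lam θ p.1 p.2, G k lam θ p.2 p.1)

noncomputable def bounds (k : ℕ) (lam θ : ℝ) (n : ℕ) : ℝ × ℝ := (step k lam θ)^[n] (0, lam)

noncomputable def lowerFix (k : ℕ) (lam θ : ℝ) : ℝ := ⨆ n, (bounds k lam θ n).1

noncomputable def upperFix (k : ℕ) (lam θ : ℝ) : ℝ := ⨅ n, (bounds k lam θ n).2

section Bounds

variable {k : ℕ} {lam θ : ℝ}

lemma isFixedPt_step_iff {p : ℝ × ℝ} :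
    Function.IsFixedPt (step k lam θ) p ↔ G k lam θ p.1 p.2 = p.1 ∧ G k lam θ p.2 p.1 = p.2 :=
  Prod.ext_iff

lemma step_le_step (hlam : 0 ≤ lam) (hθ0 : 0 ≤ θ) (hθ1 : θ ≤ 1) {p q : ℝ × ℝ}
    (hp : 0 ≤ p.1) (hq : 0 ≤ q.2) (h1 : p.1 ≤ q.1) (h2 : q.2 ≤ p.2) :
    (step k lam θ p).1 ≤ (step k lam θ q).1 ∧ (step k lam θ q).2 ≤ (step k lam θ p).2 :=
  ⟨G_le_G hlam hθ0 hθ1 hp hq h1 h2, G_le_G hlam hθ0 hθ1 hq hp h2 h1⟩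

lemma bounds_succ (n : ℕ) : bounds k lam θ (n + 1) = step k lam θ (bounds k lam θ n) :=
  Function.iterate_succ_apply' _ _ _

lemma bounds_mem_Icc (hlam : 0 ≤ lam) (hθ0 : 0 ≤ θ) (hθ1 : θ ≤ 1) (n : ℕ) :
    (bounds k lam θ n).1 ∈ Icc 0 lam ∧ (bounds k lam θ n).2 ∈ Icc 0 lam := by
  induction n with
  | zero => exact ⟨⟨le_rfl, hlam⟩, ⟨hlam, le_rfl⟩⟩
  | succ n ih =>
    rw [bounds_succ]
    exact ⟨⟨G_nonneg hlam hθ0 hθ1 ih.1.1 ih.2.1, G_le hlam hθ0 hθ1 ih.1.1 ih.2.1⟩,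
      ⟨G_nonneg hlam hθ0 hθ1 ih.2.1 ih.1.1, G_le hlam hθ0 hθ1 ih.2.1 ih.1.1⟩⟩

lemma bounds_le_bounds_succ (hlam : 0 ≤ lam) (hθ0 : 0 ≤ θ) (hθ1 : θ ≤ 1) (n : ℕ) :
    (bounds k lam θ n).1 ≤ (bounds k lam θ (n + 1)).1 ∧
      (bounds k lam θ (n + 1)).2 ≤ (bounds k lam θ n).2 := by
  have hmem := bounds_mem_Icc (k := k) hlam hθ0 hθ1
  induction n with
  | zero => exact (bounds_mem_Icc hlam hθ0 hθ1 1).imp (·.1) (·.2)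
  | succ n ih =>
    simpa only [← bounds_succ] using
      step_le_step (k := k) hlam hθ0 hθ1 (hmem n).1.1 (hmem (n + 1)).2.1 ih.1 ih.2

lemma tendsto_bounds (hlam : 0 ≤ lam) (hθ0 : 0 ≤ θ) (hθ1 : θ ≤ 1) :
    Tendsto (bounds k lam θ) atTop (𝓝 (lowerFix k lam θ, upperFix k lam θ)) := by
  have hmem := bounds_mem_Icc (k := k) hlam hθ0 hθ1
  have hmono := bounds_le_bounds_succ (k := k) hlam hθ0 hθ1
  exact (tendsto_atTop_ciSup (monotone_nat_of_le_succ fun n ↦ (hmono n).1)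
      ⟨lam, by rintro _ ⟨n, rfl⟩; exact (hmem n).1.2⟩).prodMk_nhds
    (tendsto_atTop_ciInf (antitone_nat_of_succ_le fun n ↦ (hmono n).2)
      ⟨0, by rintro _ ⟨n, rfl⟩; exact (hmem n).2.1⟩)

lemma lowerFix_nonneg (hlam : 0 ≤ lam) (hθ0 : 0 ≤ θ) (hθ1 : θ ≤ 1) : 0 ≤ lowerFix k lam θ :=
  ge_of_tendsto' (tendsto_bounds hlam hθ0 hθ1).fst_nhds fun n ↦ (bounds_mem_Icc hlam hθ0 hθ1 n).1.1

lemma upperFix_nonneg (hlam : 0 ≤ lam) (hθ0 : 0 ≤ θ) (hθ1 : θ ≤ 1) : 0 ≤ upperFix k lam θ :=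
  ge_of_tendsto' (tendsto_bounds hlam hθ0 hθ1).snd_nhds fun n ↦ (bounds_mem_Icc hlam hθ0 hθ1 n).2.1

lemma isFixedPt_lowerFix_upperFix (hlam : 0 ≤ lam) (hθ0 : 0 ≤ θ) (hθ1 : θ ≤ 1) :
    Function.IsFixedPt (step k lam θ) (lowerFix k lam θ, upperFix k lam θ) := by
  have hlim := tendsto_bounds (k := k) hlam hθ0 hθ1
  have hpos : 0 < 1 + lowerFix k lam θ + upperFix k lam θ := by
    linarith [lowerFix_nonneg (k := k) hlam hθ0 hθ1, upperFix_nonneg (k := k) hlam hθ0 hθ1]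
  have hstep : Tendsto (fun n ↦ step k lam θ (bounds k lam θ n)) atTop
      (𝓝 (step k lam θ (lowerFix k lam θ, upperFix k lam θ))) :=
    (tendsto_G hlim.fst_nhds hlim.snd_nhds hpos.ne').prodMk_nhds
      (tendsto_G hlim.snd_nhds hlim.fst_nhds (by linarith))
  refine tendsto_nhds_unique ?_ (hlim.comp (tendsto_add_atTop_nat 1))
  simpa only [Function.comp_def, bounds_succ] using hstep

lemma le_bounds_of_isFixedPt (hlam : 0 ≤ lam) (hθ0 : 0 ≤ θ) (hθ1 : θ ≤ 1) {p : ℝ × ℝ}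
    (hp : Function.IsFixedPt (step k lam θ) p) (h1 : 0 ≤ p.1) (h2 : 0 ≤ p.2) (n : ℕ) :
    (bounds k lam θ n).1 ≤ p.1 ∧ p.2 ≤ (bounds k lam θ n).2 := by
  induction n with
  | zero => exact ⟨h1, (isFixedPt_step_iff.1 hp).2 ▸ G_le hlam hθ0 hθ1 h2 h1⟩
  | succ n ih =>
    have := step_le_step (k := k) hlam hθ0 hθ1 (bounds_mem_Icc hlam hθ0 hθ1 n).1.1 h2 ih.1 ih.2
    rwa [hp.eq, ← bounds_succ] at this

lemma le_of_isFixedPt (hlam : 0 ≤ lam) (hθ0 : 0 ≤ θ) (hθ1 : θ ≤ 1) {p : ℝ × ℝ}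
    (hp : Function.IsFixedPt (step k lam θ) p) (h1 : 0 ≤ p.1) (h2 : 0 ≤ p.2) :
    lowerFix k lam θ ≤ p.1 ∧ p.2 ≤ upperFix k lam θ :=
  ⟨le_of_tendsto' (tendsto_bounds hlam hθ0 hθ1).fst_nhds
      fun n ↦ (le_bounds_of_isFixedPt hlam hθ0 hθ1 hp h1 h2 n).1,
    ge_of_tendsto' (tendsto_bounds hlam hθ0 hθ1).snd_nhds
      fun n ↦ (le_bounds_of_isFixedPt hlam hθ0 hθ1 hp h1 h2 n).2⟩

end Bounds

namespace IsTreeSolution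

variable {V : Type*} {k : ℕ} {lam θ : ℝ} {S : V → Finset V} {z1 z2 : V → ℝ}

lemma swap (h : IsTreeSolution k lam θ S z1 z2) : IsTreeSolution k lam θ S z2 z1 :=
  ⟨h.card_eq, h.eq_snd, h.eq_fst⟩

lemma le_lam (h : IsTreeSolution k lam θ S z1 z2) (hlam : 0 ≤ lam) (hθ0 : 0 ≤ θ) (hθ1 : θ ≤ 1)
    (hz1 : ∀ i, 0 ≤ z1 i) (hz2 : ∀ i, 0 ≤ z2 i) (i : V) : z1 i ≤ lam := by
  rw [h.eq_fst i]
  exact mul_le_of_le_one_right hlam (Finset.prod_le_one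
    (fun j _ ↦ F_nonneg hθ0 hθ1 (hz1 j) (hz2 j)) fun j _ ↦ F_le_one hθ1 (hz1 j) (hz2 j))

lemma mem_Icc_step (h : IsTreeSolution k lam θ S z1 z2) (hlam : 0 ≤ lam) (hθ0 : 0 ≤ θ)
    (hθ1 : θ ≤ 1) {p : ℝ × ℝ} (hp : 0 ≤ p.1) (hz : ∀ i, z1 i ∈ Icc p.1 p.2 ∧ z2 i ∈ Icc p.1 p.2)
    (i : V) : z1 i ∈ Icc (step k lam θ p).1 (step k lam θ p).2 := by
  rw [h.eq_fst i, step, ← h.card_eq i]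
  exact mul_prod_F_mem_Icc (S i) hlam hθ0 hθ1 hp (fun j _ ↦ (hz j).1) fun j _ ↦ (hz j).2

lemma mem_Icc_bounds (h : IsTreeSolution k lam θ S z1 z2) (hlam : 0 ≤ lam) (hθ0 : 0 ≤ θ)
    (hθ1 : θ ≤ 1) (hz1 : ∀ i, 0 ≤ z1 i) (hz2 : ∀ i, 0 ≤ z2 i) (n : ℕ) (i : V) :
    z1 i ∈ Icc (bounds k lam θ n).1 (bounds k lam θ n).2 ∧
      z2 i ∈ Icc (bounds k lam θ n).1 (bounds k lam θ n).2 := by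
  induction n generalizing i with
  | zero =>
    exact ⟨⟨hz1 i, h.le_lam hlam hθ0 hθ1 hz1 hz2 i⟩, ⟨hz2 i, h.swap.le_lam hlam hθ0 hθ1 hz2 hz1 i⟩⟩
  | succ n ih =>
    have hn := (bounds_mem_Icc (k := k) hlam hθ0 hθ1 n).1.1
    rw [bounds_succ]
    exact ⟨h.mem_Icc_step hlam hθ0 hθ1 hn ih i,
      h.swap.mem_Icc_step hlam hθ0 hθ1 hn (fun j ↦ (ih j).symm) i⟩

lemma mem_Icc_lowerFix_upperFix (h : IsTreeSolution k lam θ S z1 z2) (hlam : 0 ≤ lam)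
    (hθ0 : 0 ≤ θ) (hθ1 : θ ≤ 1) (hz1 : ∀ i, 0 ≤ z1 i) (hz2 : ∀ i, 0 ≤ z2 i) (i : V) :
    z1 i ∈ Icc (lowerFix k lam θ) (upperFix k lam θ) ∧
      z2 i ∈ Icc (lowerFix k lam θ) (upperFix k lam θ) := by
  have hlim := tendsto_bounds (k := k) hlam hθ0 hθ1
  have hn := h.mem_Icc_bounds hlam hθ0 hθ1 hz1 hz2
  exact ⟨⟨le_of_tendsto' hlim.fst_nhds fun n ↦ (hn n i).1.1,
      ge_of_tendsto' hlim.snd_nhds fun n ↦ (hn n i).1.2⟩,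
    ⟨le_of_tendsto' hlim.fst_nhds fun n ↦ (hn n i).2.1,
      ge_of_tendsto' hlim.snd_nhds fun n ↦ (hn n i).2.2⟩⟩

end IsTreeSolution

section Uniqueness

lemma eq_of_sq_eq {c d s s' : ℝ} (hc : 1 ≤ 2 * c) (hs : 0 < s) (hs' : 0 < s')
    (h : (1 + s) ^ 2 = c * (2 + d * s)) (h' : (1 + s') ^ 2 = c * (2 + d * s')) : s = s' := by
  have hfac : (s - s') * (s + s' + 2 - c * d) = 0 := by linear_combination h - h'
  rcases mul_eq_zero.1 hfac with hdiff | hsum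
  · linarith
  · -- then `s` and `s'` are the two roots, whose product `1 - 2c` is not positive
    have hprod : s * s' = 1 - 2 * c := by linear_combination s * hsum - h
    nlinarith [mul_pos hs hs']

lemma eq_and_eq_of_add_eq_of_mul_eq {x y x' y' : ℝ} (hxy : x < y) (hxy' : x' < y')
    (hs : x + y = x' + y') (hp : x * y = x' * y') : x = x' ∧ y = y' := by
  have hfac : (x - x') * (x - y') = 0 := by linear_combination x * hs - hp
  rcases mul_eq_zero.1 hfac with h | h
  · exact ⟨by linarith, by linarith⟩
  · linarith

variable {lam θ x y : ℝ}

lemma mul_sq_eq_of_G_eq (h : G 2 lam θ x y = x) (hxy : 1 + x + y ≠ 0) :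
    x * (1 + x + y) ^ 2 = lam * (1 + x + θ * y) ^ 2 := by
  rw [G, F, div_pow, ← mul_div_assoc, div_eq_iff (pow_ne_zero 2 hxy)] at h
  exact h.symm

lemma sq_eq_of_isFixedPt (h : Function.IsFixedPt (step 2 lam θ) (x, y)) (hpos : 0 < 1 + x + y)
    (hne : x ≠ y) : (1 + (x + y)) ^ 2 = lam * (1 - θ) * (2 + (1 + θ) * (x + y)) := by
  obtain ⟨h1, h2⟩ : G 2 lam θ x y = x ∧ G 2 lam θ y x = y := isFixedPt_step_iff.1 h
  have e1 := mul_sq_eq_of_G_eq h1 hpos.ne'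
  have e2 := mul_sq_eq_of_G_eq h2 (by linarith)
  have hfac : (x - y) * ((1 + (x + y)) ^ 2 - lam * (1 - θ) * (2 + (1 + θ) * (x + y))) = 0 := by
    linear_combination e1 - e2
  exact sub_eq_zero.1 ((mul_eq_zero.1 hfac).resolve_left (sub_ne_zero.2 hne))

lemma mul_eq_of_isFixedPt (h : Function.IsFixedPt (step 2 lam θ) (x, y)) (hpos : 0 < 1 + x + y) :
    2 * lam * (1 - θ) ^ 2 * (x * y) =
      lam * (2 + 2 * (1 + θ) * (x + y) + (1 + θ ^ 2) * (x + y) ^ 2) -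
        (x + y) * (1 + (x + y)) ^ 2 := by
  obtain ⟨h1, h2⟩ : G 2 lam θ x y = x ∧ G 2 lam θ y x = y := isFixedPt_step_iff.1 h
  linear_combination mul_sq_eq_of_G_eq h1 hpos.ne' + mul_sq_eq_of_G_eq h2 (by linarith)

theorem isFixedPt_step_two_unique {x' y' : ℝ} (hlam : 1 ≤ 2 * lam * (1 - θ))
    (hx : 0 ≤ x) (hxy : x < y) (hx' : 0 ≤ x') (hxy' : x' < y')
    (h : Function.IsFixedPt (step 2 lam θ) (x, y))
    (h' : Function.IsFixedPt (step 2 lam θ) (x', y')) : x = x' ∧ y = y' := by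
  have hs : x + y = x' + y' :=
    eq_of_sq_eq (by linarith) (by linarith) (by linarith)
      (sq_eq_of_isFixedPt h (by linarith) hxy.ne) (sq_eq_of_isFixedPt h' (by linarith) hxy'.ne)
  have hcoef : 2 * lam * (1 - θ) ^ 2 ≠ 0 := by
    have hne : lam * (1 - θ) ≠ 0 := by nlinarith
    exact mul_ne_zero (mul_ne_zero two_ne_zero (left_ne_zero_of_mul hne))
      (pow_ne_zero 2 (right_ne_zero_of_mul hne))
  have hp : x * y = x' * y' := by
    refine mul_left_cancel₀ hcoef ?_
    rw [mul_eq_of_isFixedPt h (by linarith), mul_eq_of_isFixedPt h' (by linarith), hs]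
  exact eq_and_eq_of_add_eq_of_mul_eq hxy hxy' hs hp

end Uniqueness

end WidomRowlinson

open WidomRowlinson

/-- For `k = 2`, `θ < 1/3`, `λ > 9/(4(1−3θ))`: every positive tree solution of the
Widom–Rowlinson recursion is bounded between the coordinates `x₁* < x₂*` of the
off-diagonal positive solutions of the fixed-point system. -/
theorem stmt_17 (lam θ : ℝ) (hlam : 9 / (4 * (1 - 3 * θ)) < lam)
    (hθ0 : 0 < θ) (hθ1 : θ < 1 / 3)
    (x₁ x₂ : ℝ) (hx₁ : 0 < x₁) (hx₁x₂ : x₁ < x₂)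
    (hfp1 : x₁ = lam * ((1 + x₁ + θ * x₂) / (1 + x₁ + x₂)) ^ 2)
    (hfp2 : x₂ = lam * ((1 + θ * x₁ + x₂) / (1 + x₁ + x₂)) ^ 2)
    (V : Type*) (S : V → Finset V) (hS : ∀ i, (S i).card = 2)
    (z1 z2 : V → ℝ) (hz1 : ∀ i, 0 < z1 i) (hz2 : ∀ i, 0 < z2 i)
    (hrec1 : ∀ i, z1 i = lam * ∏ j ∈ S i, (1 + z1 j + θ * z2 j) / (1 + z1 j + z2 j))
    (hrec2 : ∀ i, z2 i = lam * ∏ j ∈ S i, (1 + z2 j + θ * z1 j) / (1 + z2 j + z1 j)) :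
    ∀ i, (x₁ ≤ z1 i ∧ z1 i ≤ x₂) ∧ (x₁ ≤ z2 i ∧ z2 i ≤ x₂) := by
  have hθ1' : θ ≤ 1 := by linarith
  have hlam_ge : 9 / 4 ≤ lam := by
    refine le_trans ?_ hlam.le
    rw [div_le_div_iff₀ (by norm_num) (by linarith)]
    nlinarith
  have hlam0 : 0 ≤ lam := by linarith
  have hfix : Function.IsFixedPt (step 2 lam θ) (x₁, x₂) :=
    isFixedPt_step_iff.2 ⟨hfp1.symm, by simp only [G, F]; linear_combination -hfp2⟩
  obtain ⟨hαx₁, hx₂β⟩ := le_of_isFixedPt hlam0 hθ0.le hθ1' hfix hx₁.le (by linarith)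
  obtain ⟨hα, hβ⟩ := isFixedPt_step_two_unique (by nlinarith)
    (lowerFix_nonneg hlam0 hθ0.le hθ1') (by linarith) hx₁.le hx₁x₂
    (isFixedPt_lowerFix_upperFix hlam0 hθ0.le hθ1') hfix
  intro i
  rw [← hα, ← hβ]
  exact (IsTreeSolution.mk hS hrec1 hrec2).mem_Icc_lowerFix_upperFix hlam0 hθ0.le hθ1'
    (fun i ↦ (hz1 i).le) (fun i ↦ (hz2 i).le) i
end

section
/- Let k ≥ 6, 0 < θ < (k² − 6k + 1)/(k+1)², and define s^± = (k − 3 − (k+1)θ ± √((1−θ)(k² − 6k + 1 − (k+1)²θ)))/(4(1+θ)) and λ^± = s^±·((1 + 2s^±)/(1 + (1+θ)s^±))^k. If λ^− < λ < λ^+, then the two-periodic system z = φ(t), t = φ(z), where φ(x) = λ·((1 + (1+θ)x)/(1 + 2x))^k, has at least three positive solutions: (x*, x*) with x* the unique positive fixed point of φ, and two solutions (x₀, x₁), (x₁, x₀) with x₀ ≠ x₁ satisfying φ(x₀) = x₁ and φ(x₁) = x₀. -/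
/-!
The map `φ` is decreasing on `[0, ∞)`, so it has exactly one positive fixed point `x*`, and
`λ = x* ((1 + 2x*) / (1 + (1+θ)x*))^k` is an increasing function of `x*`; hence `λ⁻ < λ < λ⁺`
places `x*` strictly between `s⁻` and `s⁺`. These are the roots of
`(1 + (1+θ)x)(1 + 2x) = k(1-θ)x`, which is exactly the equation `φ'(x*) = -1`, so between them
`φ'(x*) < -1`. Then `(φ ∘ φ)'(x*) > 1`: just left of `x*` the graph of `φ ∘ φ` lies below the
diagonal, while `φ(φ(0)) > 0`, so `φ ∘ φ` has a fixed point `x₀ ∈ (0, x*)`; it is not a fixed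
point of `φ`, so `x₁ = φ(x₀) ≠ x₀`.
-/

open Set Filter Topology Function

theorem AntitoneOn.eq_of_isFixedPt {α : Type*} [LinearOrder α] {f : α → α} {s : Set α}
    (hf : AntitoneOn f s) {x y : α} (hx : x ∈ s) (hy : y ∈ s)
    (hfx : IsFixedPt f x) (hfy : IsFixedPt f y) : x = y := by
  rcases le_total x y with h | h
  · exact le_antisymm h (by simpa only [hfx.eq, hfy.eq] using hf hx hy h)
  · exact le_antisymm (by simpa only [hfx.eq, hfy.eq] using hf hy hx h) h

theorem eventually_neg_nhdsLT_of_hasDerivAt_pos {F : ℝ → ℝ} {a d : ℝ} (hF : HasDerivAt F d a)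
    (hd : 0 < d) (ha : F a = 0) : ∀ᶠ x in 𝓝[<] a, F x < 0 := by
  filter_upwards [nhdsLT_le_nhdsNE a (hF.tendsto_slope.eventually (eventually_gt_nhds hd)),
    self_mem_nhdsWithin] with x hslope hx
  exact neg_of_slope_pos hx hslope ha

/-- Just left of a fixed point `a` with `g' a > 1` the graph of `g` lies below the diagonal. -/
theorem exists_isFixedPt_mem_Ioo_of_one_lt_deriv {g : ℝ → ℝ} {a b d : ℝ} (hba : b < a)
    (hg : ContinuousOn g (Icc b a)) (hgb : b < g b) (hga : IsFixedPt g a)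
    (hd : HasDerivAt g d a) (hd1 : 1 < d) : ∃ x ∈ Ioo b a, IsFixedPt g x := by
  have hbelow : ∀ᶠ x in 𝓝[<] a, g x - x < 0 :=
    eventually_neg_nhdsLT_of_hasDerivAt_pos (hd.sub (hasDerivAt_id a)) (by linarith)
      (by simp [hga.eq])
  obtain ⟨c, hgc, hc⟩ := (hbelow.and (Ioo_mem_nhdsLT hba)).exists
  obtain ⟨x, hx, hfix⟩ :=
    exists_mem_Icc_isFixedPt (hg.mono (Icc_subset_Icc_right hc.2.le)) hc.1.le hgb.le
      (by linarith)
  refine ⟨x, ⟨lt_of_le_of_ne hx.1 ?_, hx.2.trans_lt hc.2⟩, hfix⟩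
  rintro rfl
  exact hgb.ne' hfix

namespace WidomRowlinson

noncomputable def phi (k : ℕ) (θ lam x : ℝ) : ℝ := lam * ((1 + (1 + θ) * x) / (1 + 2 * x)) ^ k

/-- The activity `λ` for which `s` is the fixed point of `φ`. -/
noncomputable def lamOf (k : ℕ) (θ s : ℝ) : ℝ := s * ((1 + 2 * s) / (1 + (1 + θ) * s)) ^ k

section Phi

variable {k : ℕ} {θ lam : ℝ}

theorem phi_pos (hθ : 0 ≤ θ) (hlam : 0 < lam) {x : ℝ} (hx : 0 ≤ x) : 0 < phi k θ lam x := by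
  unfold phi; positivity

theorem phi_le (hθ0 : 0 ≤ θ) (hθ1 : θ ≤ 1) (hlam : 0 ≤ lam) {x : ℝ} (hx : 0 ≤ x) :
    phi k θ lam x ≤ lam := by
  have hratio : (1 + (1 + θ) * x) / (1 + 2 * x) ≤ 1 := by
    rw [div_le_one (by positivity)]; nlinarith
  exact mul_le_of_le_one_right hlam (pow_le_one₀ (by positivity) hratio)

theorem antitoneOn_phi (hθ0 : 0 ≤ θ) (hθ1 : θ ≤ 1) (hlam : 0 ≤ lam) :
    AntitoneOn (phi k θ lam) (Ici 0) := by
  intro a (ha : 0 ≤ a) b (hb : 0 ≤ b) hab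
  have hratio : (1 + (1 + θ) * b) / (1 + 2 * b) ≤ (1 + (1 + θ) * a) / (1 + 2 * a) := by
    rw [div_le_div_iff₀ (by positivity) (by positivity)]; nlinarith
  exact mul_le_mul_of_nonneg_left (pow_le_pow_left₀ (by positivity) hratio k) hlam

theorem hasDerivAt_phi (hθ : 0 ≤ θ) {x : ℝ} (hx : 0 ≤ x) :
    HasDerivAt (phi k θ lam)
      (k * phi k θ lam x * (θ - 1) / ((1 + (1 + θ) * x) * (1 + 2 * x))) x := by
  have hE : 0 < 1 + (1 + θ) * x := by positivity
  have hD : 0 < 1 + 2 * x := by positivity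
  have hnum : HasDerivAt (fun y => 1 + (1 + θ) * y) (1 + θ) x := by
    simpa using ((hasDerivAt_id x).const_mul (1 + θ)).const_add 1
  have hden : HasDerivAt (fun y => 1 + 2 * y) 2 x := by
    simpa using ((hasDerivAt_id x).const_mul 2).const_add 1
  refine (((hnum.fun_div hden hD.ne').fun_pow k).const_mul lam).congr_deriv ?_
  rcases k with _ | m
  · simp
  · simp only [phi, Nat.cast_add, Nat.cast_one, add_tsub_cancel_right, pow_succ]
    field_simp
    ring

theorem continuousOn_phi (hθ : 0 ≤ θ) : ContinuousOn (phi k θ lam) (Ici 0) :=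
  fun _ hx => (hasDerivAt_phi hθ hx).continuousAt.continuousWithinAt

theorem exists_pos_phi_eq_self (hθ0 : 0 ≤ θ) (hθ1 : θ ≤ 1) (hlam : 0 < lam) :
    ∃ x, 0 < x ∧ phi k θ lam x = x := by
  obtain ⟨x, hx, hfix⟩ := exists_mem_Icc_isFixedPt
    ((continuousOn_phi hθ0).mono Icc_subset_Ici_self) hlam.le (phi_pos hθ0 hlam le_rfl).le
    (phi_le hθ0 hθ1 hlam.le hlam.le)
  refine ⟨x, lt_of_le_of_ne hx.1 ?_, hfix⟩
  rintro rfl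
  simp [IsFixedPt, phi, hlam.ne'] at hfix

theorem exists_mem_Ioo_phi_phi_eq_self (hθ : 0 ≤ θ) (hlam : 0 < lam) {xs c : ℝ} (hxs : 0 < xs)
    (hfix : phi k θ lam xs = xs) (hderiv : HasDerivAt (phi k θ lam) c xs) (hc : c < -1) :
    ∃ x ∈ Ioo 0 xs, phi k θ lam (phi k θ lam x) = x := by
  have hcont : ContinuousOn (phi k θ lam ∘ phi k θ lam) (Icc 0 xs) :=
    (continuousOn_phi hθ).comp ((continuousOn_phi hθ).mono Icc_subset_Ici_self)
      fun y hy => (phi_pos hθ hlam hy.1).le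
  exact exists_isFixedPt_mem_Ioo_of_one_lt_deriv (g := phi k θ lam ∘ phi k θ lam) hxs hcont
    (phi_pos hθ hlam (phi_pos hθ hlam le_rfl).le) (by simp [IsFixedPt, hfix])
    (HasDerivAt.comp xs (by rwa [hfix]) hderiv) (by nlinarith)

theorem lamOf_eq_of_phi_eq_self (hθ : 0 ≤ θ) {x : ℝ} (hx : 0 ≤ x) (hfix : phi k θ lam x = x) :
    lamOf k θ x = lam := by
  have hE : 0 < 1 + (1 + θ) * x := by positivity
  have hD : 0 < 1 + 2 * x := by positivity
  nth_rw 1 [lamOf, ← hfix]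
  rw [phi, mul_assoc, ← mul_pow, div_mul_div_cancel₀ hD.ne', div_self hE.ne', one_pow, mul_one]

theorem monotoneOn_lamOf (hθ0 : 0 ≤ θ) (hθ1 : θ ≤ 1) :
    MonotoneOn (lamOf k θ) (Ici 0) := by
  intro a (ha : 0 ≤ a) b (hb : 0 ≤ b) hab
  have hratio : (1 + 2 * a) / (1 + (1 + θ) * a) ≤ (1 + 2 * b) / (1 + (1 + θ) * b) := by
    rw [div_le_div_iff₀ (by positivity) (by positivity)]; nlinarith
  exact mul_le_mul hab (pow_le_pow_left₀ (by positivity) hratio k) (by positivity) hb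

end Phi

section Roots

def disc (n θ : ℝ) : ℝ := (1 - θ) * (n ^ 2 - 6 * n + 1 - (n + 1) ^ 2 * θ)

/-- `s⁺`: the larger root of `(1 + (1+θ)x)(1 + 2x) = n(1-θ)x`. -/
noncomputable def sPlus (n θ : ℝ) : ℝ := (n - 3 - (n + 1) * θ + √(disc n θ)) / (4 * (1 + θ))

/-- `s⁻`: the smaller root of `(1 + (1+θ)x)(1 + 2x) = n(1-θ)x`. -/
noncomputable def sMinus (n θ : ℝ) : ℝ := (n - 3 - (n + 1) * θ - √(disc n θ)) / (4 * (1 + θ))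

variable {n θ : ℝ}

theorem lt_one_of_lt_critical (hn : 0 < n) (hθc : θ < (n ^ 2 - 6 * n + 1) / (n + 1) ^ 2) :
    θ < 1 := by
  rw [lt_div_iff₀ (by positivity)] at hθc
  nlinarith

theorem disc_nonneg (hn : 0 < n) (hθc : θ < (n ^ 2 - 6 * n + 1) / (n + 1) ^ 2) :
    0 ≤ disc n θ := by
  have hθ1 := lt_one_of_lt_critical hn hθc
  rw [lt_div_iff₀ (by positivity)] at hθc
  exact mul_nonneg (by linarith) (by linarith)

theorem sMinus_pos (hn : 1 < n) (hθ : 0 ≤ θ) (hθc : θ < (n ^ 2 - 6 * n + 1) / (n + 1) ^ 2) :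
    0 < sMinus n θ := by
  rw [lt_div_iff₀ (by positivity)] at hθc
  have hA : 0 < n - 3 - (n + 1) * θ := by nlinarith
  have hsqrt : √(disc n θ) < n - 3 - (n + 1) * θ := by
    rw [Real.sqrt_lt' hA, disc]; nlinarith
  exact div_pos (by linarith) (by positivity)

theorem sMinus_le_sPlus (hθ : 0 ≤ θ) : sMinus n θ ≤ sPlus n θ :=
  div_le_div_of_nonneg_right (by linarith [Real.sqrt_nonneg (disc n θ)]) (by positivity)

theorem mul_lt_of_mem_Ioo_sMinus_sPlus (hθ : 0 ≤ θ) (hdisc : 0 ≤ disc n θ) {x : ℝ}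
    (hx : x ∈ Ioo (sMinus n θ) (sPlus n θ)) :
    (1 + (1 + θ) * x) * (1 + 2 * x) < n * (1 - θ) * x := by
  have hfactor : (1 + (1 + θ) * x) * (1 + 2 * x) - n * (1 - θ) * x
      = 2 * (1 + θ) * ((x - sMinus n θ) * (x - sPlus n θ)) := by
    have hsq : √(disc n θ) ^ 2 = (1 - θ) * (n ^ 2 - 6 * n + 1 - (n + 1) ^ 2 * θ) :=
      Real.sq_sqrt hdisc
    simp only [sMinus, sPlus]
    field_simp
    linear_combination 2 * hsq
  have hneg : (x - sMinus n θ) * (x - sPlus n θ) < 0 :=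
    mul_neg_of_pos_of_neg (by linarith [hx.1]) (by linarith [hx.2])
  nlinarith

end Roots

end WidomRowlinson

open WidomRowlinson in
/-- For `k ≥ 6`, `θ < (k²−6k+1)/(k+1)²` and `λ ∈ (λ⁻, λ⁺)`, the two-periodic system
`z = φ(t)`, `t = φ(z)` with `φ(x) = λ((1+(1+θ)x)/(1+2x))^k` has at least three positive
solutions: the diagonal one `(x*, x*)` with `x*` the unique positive fixed point of `φ`,
and two off-diagonal ones `(x₀, x₁)`, `(x₁, x₀)` with `φ(x₀) = x₁`, `φ(x₁) = x₀`. -/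
theorem stmt_19 (k : ℕ) (hk : 6 ≤ k) (lam θ : ℝ) (hθ0 : 0 < θ)
    (hθc : θ < ((k : ℝ) ^ 2 - 6 * k + 1) / ((k : ℝ) + 1) ^ 2)
    (sp sm lp lm : ℝ)
    (hsp : sp = ((k : ℝ) - 3 - ((k : ℝ) + 1) * θ +
      Real.sqrt ((1 - θ) * ((k : ℝ) ^ 2 - 6 * k + 1 - ((k : ℝ) + 1) ^ 2 * θ))) /
      (4 * (1 + θ)))
    (hsm : sm = ((k : ℝ) - 3 - ((k : ℝ) + 1) * θ -
      Real.sqrt ((1 - θ) * ((k : ℝ) ^ 2 - 6 * k + 1 - ((k : ℝ) + 1) ^ 2 * θ))) /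
      (4 * (1 + θ)))
    (hlp : lp = sp * ((1 + 2 * sp) / (1 + (1 + θ) * sp)) ^ k)
    (hlm : lm = sm * ((1 + 2 * sm) / (1 + (1 + θ) * sm)) ^ k)
    (hlam1 : lm < lam) (hlam2 : lam < lp) :
    ∃ xs x₀ x₁ : ℝ, 0 < xs ∧ 0 < x₀ ∧ 0 < x₁ ∧ x₀ ≠ x₁ ∧
      lam * ((1 + (1 + θ) * xs) / (1 + 2 * xs)) ^ k = xs ∧
      (∀ x : ℝ, 0 < x → lam * ((1 + (1 + θ) * x) / (1 + 2 * x)) ^ k = x → x = xs) ∧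
      lam * ((1 + (1 + θ) * x₀) / (1 + 2 * x₀)) ^ k = x₁ ∧
      lam * ((1 + (1 + θ) * x₁) / (1 + 2 * x₁)) ^ k = x₀ := by
  subst hsp hsm hlp hlm
  have hk1 : (1 : ℝ) < k := by exact_mod_cast (by omega : 1 < k)
  have hθ1 : θ < 1 := lt_one_of_lt_critical (by linarith) hθc
  have hsm0 : 0 < sMinus k θ := sMinus_pos hk1 hθ0.le hθc
  have hlam : 0 < lam := (show 0 < lamOf k θ (sMinus k θ) by unfold lamOf; positivity).trans hlam1
  obtain ⟨xs, hxs, hfix⟩ := exists_pos_phi_eq_self (k := k) hθ0.le hθ1.le hlam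
  have huniq (x : ℝ) (hx : 0 < x) (hx_fix : phi k θ lam x = x) : x = xs :=
    (antitoneOn_phi hθ0.le hθ1.le hlam.le).eq_of_isFixedPt hx.le hxs.le hx_fix hfix
  have hlamOf := lamOf_eq_of_phi_eq_self hθ0.le hxs.le hfix
  have hxs_mem : xs ∈ Ioo (sMinus k θ) (sPlus k θ) :=
    ⟨(monotoneOn_lamOf hθ0.le hθ1.le).reflect_lt hsm0.le hxs.le (by rw [hlamOf]; exact hlam1),
      (monotoneOn_lamOf hθ0.le hθ1.le).reflect_lt hxs.le
        (hsm0.le.trans (sMinus_le_sPlus hθ0.le)) (by rw [hlamOf]; exact hlam2)⟩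
  set c := (k : ℝ) * xs * (θ - 1) / ((1 + (1 + θ) * xs) * (1 + 2 * xs))
  have hderiv : HasDerivAt (phi k θ lam) c xs := by
    simpa only [hfix] using hasDerivAt_phi (k := k) (lam := lam) hθ0.le hxs.le
  have hc : c < -1 := by
    rw [div_lt_iff₀ (by positivity)]
    linarith [mul_lt_of_mem_Ioo_sMinus_sPlus hθ0.le (disc_nonneg (by linarith) hθc) hxs_mem]
  obtain ⟨x₀, hx₀, hper⟩ := exists_mem_Ioo_phi_phi_eq_self hθ0.le hlam hxs hfix hderiv hc
  refine ⟨xs, x₀, phi k θ lam x₀, hxs, hx₀.1, phi_pos hθ0.le hlam hx₀.1.le, fun h => ?_, hfix,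
    huniq, rfl, hper⟩
  exact hx₀.2.ne (huniq x₀ hx₀.1 h.symm)
end
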